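/- arXiv:1304.2096 — 4 statements merged into one kernel-verified Lean document; each statement's English description precedes it below -/
import Mathlib

section
/- Let $E$ be a normed space and suppose $1 \le p \le q_1 < q < q_2 < \infty$ with $1/q = (1-\theta)/q_1 + \theta/q_2$ for some $\theta \in (0,1)$. Then for all $n$, $\pi^{(n)}_{q,p}(E) \le (\pi^{(n)}_{q_1,p}(E))^{1-\theta} \cdot (\pi^{(n)}_{q_2,p}(E))^{\theta}$. -/
open scoped BigOperators

/-- The weak `p`-summing norm of a tuple in a complex normed space. -/
noncomputable def weakSummingNorm {E : Type*} [NormedAddCommGroup E] [NormedSpace ℂ E]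
    (p : ℝ) {n : ℕ} (x : Fin n → E) : ℝ :=
  sSup {s : ℝ | ∃ lam : E →L[ℂ] ℂ, ‖lam‖ ≤ 1 ∧ s = (∑ i, ‖lam (x i)‖ ^ p) ^ (1 / p)}

/-- The `(q,p)`-summing constant `π^{(n)}_{q,p}(E)` of a normed space `E`. -/
noncomputable def summingConstant (E : Type*) [NormedAddCommGroup E] [NormedSpace ℂ E]
    (q p : ℝ) (n : ℕ) : ℝ :=
  sSup {s : ℝ | ∃ x : Fin n → E, weakSummingNorm p x ≤ 1 ∧ s = (∑ i, ‖x i‖ ^ q) ^ (1 / q)}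

/-!
Every `‖x i‖` is bounded by the weak `p`-summing norm of `x` (test `x` against a norming
functional of `x i`), so the suprema defining the summing constants are finite. For a single tuple,
Hölder's inequality applied to `‖x i‖ = ‖x i‖ ^ (1 - θ) * ‖x i‖ ^ θ` with the exponents
`q₁ / (1 - θ)`, `q₂ / θ`, `q` gives `‖x‖_q ≤ ‖x‖_{q₁} ^ (1 - θ) * ‖x‖_{q₂} ^ θ`; bounding the
right-hand side by the summing constants and taking the supremum over `x` gives the claim.
-/

theorem Real.Lp_le_Lp_rpow_mul_Lp_rpow_of_nonneg {ι : Type*} (s : Finset ι) {a : ι → ℝ}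
    (ha : ∀ i ∈ s, 0 ≤ a i) {q q₁ q₂ θ : ℝ} (hq₁ : 0 < q₁) (hq₂ : 0 < q₂) (hθ₀ : 0 < θ)
    (hθ₁ : θ < 1) (hq : 1 / q = (1 - θ) / q₁ + θ / q₂) :
    (∑ i ∈ s, a i ^ q) ^ (1 / q) ≤
      ((∑ i ∈ s, a i ^ q₁) ^ (1 / q₁)) ^ (1 - θ) * ((∑ i ∈ s, a i ^ q₂) ^ (1 / q₂)) ^ θ := by
  have hθ : 0 < 1 - θ := by linarith
  have hq0 : 0 < q := one_div_pos.mp (hq ▸ by positivity)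
  have hsum_nonneg (r : ℝ) : 0 ≤ ∑ i ∈ s, a i ^ r :=
    Finset.sum_nonneg fun i hi => Real.rpow_nonneg (ha i hi) r
  have htriple : (q₁ / (1 - θ)).HolderTriple (q₂ / θ) q :=
    ⟨by rw [inv_div, inv_div, inv_eq_one_div, hq], by positivity, by positivity⟩
  have holder : ∑ i ∈ s, a i ^ q ≤ (∑ i ∈ s, a i ^ q₁) ^ (q / (q₁ / (1 - θ))) *
      (∑ i ∈ s, a i ^ q₂) ^ (q / (q₂ / θ)) := by
    convert Real.Lr_rpow_le_Lp_mul_Lq_of_nonneg s htriple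
      (fun i hi => Real.rpow_nonneg (ha i hi) (1 - θ))
      (fun i hi => Real.rpow_nonneg (ha i hi) θ) using 1
    · refine Finset.sum_congr rfl fun i hi => ?_
      rw [← Real.rpow_add' (ha i hi) (by simp), sub_add_cancel, Real.rpow_one]
    · congr 2 <;> refine Finset.sum_congr rfl fun i hi => ?_
      · rw [← Real.rpow_mul (ha i hi), mul_div_cancel₀ _ hθ.ne']
      · rw [← Real.rpow_mul (ha i hi), mul_div_cancel₀ _ hθ₀.ne']
  calc (∑ i ∈ s, a i ^ q) ^ (1 / q)
      ≤ ((∑ i ∈ s, a i ^ q₁) ^ (q / (q₁ / (1 - θ))) *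
          (∑ i ∈ s, a i ^ q₂) ^ (q / (q₂ / θ))) ^ (1 / q) :=
        Real.rpow_le_rpow (hsum_nonneg q) holder (by positivity)
    _ = _ := by
      rw [Real.mul_rpow (Real.rpow_nonneg (hsum_nonneg _) _) (Real.rpow_nonneg (hsum_nonneg _) _)]
      simp only [← Real.rpow_mul (hsum_nonneg _)]
      congr 2 <;> field_simp

section SummingConstant

variable {E : Type*} [NormedAddCommGroup E] [NormedSpace ℂ E] {p q : ℝ} {n : ℕ}

theorem le_weakSummingNorm (hp : 0 ≤ p) (x : Fin n → E) {lam : E →L[ℂ] ℂ} (hlam : ‖lam‖ ≤ 1) :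
    (∑ i, ‖lam (x i)‖ ^ p) ^ (1 / p) ≤ weakSummingNorm p x := by
  refine le_csSup ⟨(∑ i, ‖x i‖ ^ p) ^ (1 / p), ?_⟩ ⟨lam, hlam, rfl⟩
  rintro _ ⟨μ, hμ, rfl⟩
  gcongr with i
  exact μ.le_of_opNorm_le hμ (x i) |>.trans_eq (one_mul _)

theorem norm_le_weakSummingNorm (hp : 0 < p) (x : Fin n → E) (i : Fin n) :
    ‖x i‖ ≤ weakSummingNorm p x := by
  obtain ⟨lam, hlam, hlam_x⟩ := exists_dual_vector'' ℂ (x i)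
  calc ‖x i‖ = (‖lam (x i)‖ ^ p) ^ (1 / p) := by
        rw [hlam_x, RCLike.norm_ofReal, abs_norm, one_div,
          Real.rpow_rpow_inv (norm_nonneg _) hp.ne']
    _ ≤ (∑ j, ‖lam (x j)‖ ^ p) ^ (1 / p) := by
        gcongr
        exact Finset.single_le_sum (f := fun j => ‖lam (x j)‖ ^ p) (fun j _ => by positivity)
          (Finset.mem_univ i)
    _ ≤ weakSummingNorm p x := le_weakSummingNorm hp.le x hlam

theorem le_summingConstant (hp : 0 < p) (hq : 0 ≤ q) {x : Fin n → E}
    (hx : weakSummingNorm p x ≤ 1) : (∑ i, ‖x i‖ ^ q) ^ (1 / q) ≤ summingConstant E q p n := by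
  refine le_csSup ⟨(n : ℝ) ^ (1 / q), ?_⟩ ⟨x, hx, rfl⟩
  rintro _ ⟨y, hy, rfl⟩
  gcongr
  calc ∑ i, ‖y i‖ ^ q ≤ ∑ _i : Fin n, (1 : ℝ) := Finset.sum_le_sum fun i _ =>
        Real.rpow_le_one (norm_nonneg _) ((norm_le_weakSummingNorm hp y i).trans hy) hq
    _ = n := by simp

theorem summingConstant_nonneg : 0 ≤ summingConstant E q p n :=
  Real.sSup_nonneg <| by rintro _ ⟨x, -, rfl⟩; positivity

end SummingConstant

theorem stmt7 (E : Type*) [NormedAddCommGroup E] [NormedSpace ℂ E]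
    (p q q₁ q₂ θ : ℝ) (hp : 1 ≤ p) (hpq₁ : p ≤ q₁) (hq₁ : q₁ < q) (hq₂ : q < q₂)
    (hθ₀ : 0 < θ) (hθ₁ : θ < 1) (hq : 1 / q = (1 - θ) / q₁ + θ / q₂) (n : ℕ) :
    summingConstant E q p n ≤
      (summingConstant E q₁ p n) ^ (1 - θ) * (summingConstant E q₂ p n) ^ θ := by
  have hp₀ : 0 < p := zero_lt_one.trans_le hp
  have hq₁₀ : 0 < q₁ := hp₀.trans_le hpq₁
  have hq₂₀ : 0 < q₂ := hq₁₀.trans (hq₁.trans hq₂)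
  have hS₁ : 0 ≤ summingConstant E q₁ p n := summingConstant_nonneg
  have hS₂ : 0 ≤ summingConstant E q₂ p n := summingConstant_nonneg
  refine Real.sSup_le ?_ (by positivity)
  rintro _ ⟨x, hx, rfl⟩
  calc (∑ i, ‖x i‖ ^ q) ^ (1 / q)
      ≤ ((∑ i, ‖x i‖ ^ q₁) ^ (1 / q₁)) ^ (1 - θ) * ((∑ i, ‖x i‖ ^ q₂) ^ (1 / q₂)) ^ θ :=
        Real.Lp_le_Lp_rpow_mul_Lp_rpow_of_nonneg _ (fun i _ => norm_nonneg _) hq₁₀ hq₂₀ hθ₀ hθ₁ hq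
    _ ≤ _ := by
        gcongr
        · exact le_summingConstant hp₀ hq₁₀.le hx
        · exact le_summingConstant hp₀ hq₂₀.le hx
end

section
/- Let $1 \le p < \infty$ and let $(x_1,\dots,x_n)$ be an orthogonal $n$-tuple in a Hilbert space $H$. If $p \ge 2$ then $\mu_{p,n}(x_1,\dots,x_n) = \max_i \|x_i\|$; if $1 < p < 2$ then, with $1/r = 1/p - 1/2$, $\mu_{p,n}(x_1,\dots,x_n) = (\sum_{i=1}^n \|x_i\|^r)^{1/r}$; and if $p = 1$ then $\mu_{1,n}(x_1,\dots,x_n) = (\sum_{i=1}^n \|x_i\|^2)^{1/2}$. -/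
/-!
For orthogonal `xᵢ`, the families `(‖λ xᵢ‖)ᵢ` with `‖λ‖ ≤ 1` are exactly the families
`(uᵢ ‖xᵢ‖)ᵢ` with `u` in the nonnegative part of the unit ball of `ℓ²`: one inclusion is Bessel's
inequality for the functional `λ`, the other is realised by `λ = ⟪∑ (uᵢ / ‖xᵢ‖) xᵢ, ·⟫`.
So `μ_{p,n}(x)` is the norm of the diagonal operator `ℓ² → ℓᵖ` with entries `‖xᵢ‖`. For `p ≥ 2`
this is `maxᵢ ‖xᵢ‖` since `uᵢᵖ ≤ uᵢ²`; for `p < 2` Hölder's inequality with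
`1/p = 1/2 + 1/r` bounds it by `‖(‖xᵢ‖)ᵢ‖_r`, with equality at `uᵢ ∝ ‖xᵢ‖^{r/2}`.
-/

open scoped BigOperators ComplexInnerProductSpace

open Finset
open scoped InnerProductSpace

section Orthogonal

variable {𝕜 H ι : Type*} [RCLike 𝕜] [NormedAddCommGroup H] [InnerProductSpace 𝕜 H] [Fintype ι]
  {x : ι → H}

lemma inner_sum_smul_left_of_pairwise_inner_eq_zero
    (hx : Pairwise fun i j => ⟪x i, x j⟫_𝕜 = 0) (c : ι → 𝕜) (i : ι) :
    ⟪∑ j, c j • x j, x i⟫_𝕜 = starRingEnd 𝕜 (c i) * (‖x i‖ : 𝕜) ^ 2 := by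
  classical
  rw [sum_inner, sum_eq_single i (fun j _ hj => by rw [inner_smul_left, hx hj, mul_zero])
    (by simp), inner_smul_left, inner_self_eq_norm_sq_to_K]

lemma norm_sum_smul_sq_of_pairwise_inner_eq_zero
    (hx : Pairwise fun i j => ⟪x i, x j⟫_𝕜 = 0) (c : ι → 𝕜) :
    ‖∑ i, c i • x i‖ ^ 2 = ∑ i, ‖c i‖ ^ 2 * ‖x i‖ ^ 2 := by
  have hterm (i : ι) :
      ⟪∑ j, c j • x j, c i • x i⟫_𝕜 = ((‖c i‖ ^ 2 * ‖x i‖ ^ 2 : ℝ) : 𝕜) := by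
    rw [inner_smul_right, inner_sum_smul_left_of_pairwise_inner_eq_zero hx, ← mul_assoc,
      RCLike.mul_conj]
    push_cast
    ring
  rw [@norm_sq_eq_re_inner 𝕜, inner_sum, sum_congr rfl fun i _ => hterm i, ← RCLike.ofReal_sum,
    RCLike.ofReal_re]

-- Bessel's inequality for a functional; `H` need not be complete, so Riesz representation is
-- replaced by testing `f` against `y = ∑ (conj (f xᵢ) / ‖xᵢ‖²) xᵢ`, for which `‖y‖² = f y`.
lemma sum_norm_apply_div_norm_sq_le (hx : Pairwise fun i j => ⟪x i, x j⟫_𝕜 = 0)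
    (f : H →L[𝕜] 𝕜) :
    ∑ i, (‖f (x i)‖ / ‖x i‖) ^ 2 ≤ ‖f‖ ^ 2 := by
  set T := ∑ i, (‖f (x i)‖ / ‖x i‖) ^ 2
  set y := ∑ i, (starRingEnd 𝕜 (f (x i)) / (‖x i‖ : 𝕜) ^ 2) • x i
  have hy : ‖y‖ ^ 2 = T := by
    rw [norm_sum_smul_sq_of_pairwise_inner_eq_zero hx]
    refine sum_congr rfl fun i _ => ?_
    rcases eq_or_ne ‖x i‖ 0 with h | h
    · simp [h]
    · simp only [norm_div, RCLike.norm_conj, norm_pow, RCLike.norm_ofReal, abs_norm]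
      field_simp
  have hfy : f y = T := by
    simp only [y, T, map_sum, map_smul, smul_eq_mul, div_mul_eq_mul_div, RCLike.conj_mul]
    push_cast [div_pow]
    rfl
  have hyf : ‖y‖ ≤ ‖f‖ := by
    have : ‖y‖ ^ 2 ≤ ‖f‖ * ‖y‖ := by
      calc ‖y‖ ^ 2 = ‖f y‖ := by rw [hfy, hy, RCLike.norm_ofReal, abs_of_nonneg (by positivity)]
        _ ≤ ‖f‖ * ‖y‖ := f.le_opNorm y
    nlinarith [norm_nonneg y, norm_nonneg f]
  rw [← hy]
  gcongr

lemma exists_norm_le_one_norm_apply_eq (hx : Pairwise fun i j => ⟪x i, x j⟫_𝕜 = 0)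
    {u : ι → ℝ} (hu0 : ∀ i, 0 ≤ u i) (hu : ∑ i, u i ^ 2 ≤ 1) :
    ∃ f : H →L[𝕜] 𝕜, ‖f‖ ≤ 1 ∧ ∀ i, ‖f (x i)‖ = u i * ‖x i‖ := by
  set c : ι → 𝕜 := fun i => ((u i / ‖x i‖ : ℝ) : 𝕜)
  have hc (i : ι) : ‖c i‖ = u i / ‖x i‖ := by
    rw [RCLike.norm_ofReal, abs_of_nonneg (div_nonneg (hu0 i) (norm_nonneg _))]
  refine ⟨innerSL 𝕜 (∑ i, c i • x i), ?_, fun i => ?_⟩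
  · have : ‖∑ i, c i • x i‖ ^ 2 ≤ 1 := by
      rw [norm_sum_smul_sq_of_pairwise_inner_eq_zero hx]
      refine le_trans (sum_le_sum fun i _ => ?_) hu
      rcases eq_or_ne ‖x i‖ 0 with h | h
      · simp [h, sq_nonneg]
      · rw [hc, div_pow, div_mul_cancel₀ _ (pow_ne_zero 2 h)]
    rw [innerSL_apply_norm]
    exact (sq_le_one_iff₀ (norm_nonneg _)).mp this
  · rw [innerSL_apply_apply, inner_sum_smul_left_of_pairwise_inner_eq_zero hx, norm_mul,
      RCLike.norm_conj, norm_pow, hc, RCLike.norm_ofReal, abs_norm]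
    rcases eq_or_ne ‖x i‖ 0 with h | h
    · simp [h]
    · field_simp

end Orthogonal

section DiagonalOperator

variable {ι : Type*} [Fintype ι] {a : ι → ℝ}

def l2BallLpValues (p : ℝ) (a : ι → ℝ) : Set ℝ :=
  {s | ∃ u : ι → ℝ, (∀ i, 0 ≤ u i) ∧ ∑ i, u i ^ 2 ≤ 1 ∧ s = (∑ i, (u i * a i) ^ p) ^ (1 / p)}

lemma isGreatest_l2BallLpValues_iSup {p : ℝ} (hp : 2 ≤ p) (ha : ∀ i, 0 ≤ a i) :
    IsGreatest (l2BallLpValues p a) (⨆ i, a i) := by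
  have hp0 : p ≠ 0 := by linarith
  have haM : ∀ i, a i ≤ ⨆ i, a i := le_ciSup (Set.finite_range a).bddAbove
  have hM : 0 ≤ ⨆ i, a i := Real.iSup_nonneg ha
  constructor
  · rcases isEmpty_or_nonempty ι with hι | hι
    · exact ⟨0, fun _ => le_rfl, by simp, by simp [Real.zero_rpow, hp0]⟩
    · classical
      obtain ⟨j, hj⟩ := exists_eq_ciSup_of_finite (f := a)
      refine ⟨Pi.single j 1, fun i => ?_, by simp [Pi.single_apply], ?_⟩
      · rw [Pi.single_apply]; split_ifs <;> norm_num
      · rw [sum_eq_single j (fun i _ hi => by simp [hi, Real.zero_rpow hp0]) (by simp),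
          Pi.single_eq_same, one_mul, one_div, Real.rpow_rpow_inv (ha j) hp0, hj]
  · rintro _ ⟨u, hu0, hu, rfl⟩
    have hu1 (i : ι) : u i ≤ 1 := (sq_le_one_iff₀ (hu0 i)).mp <|
      (single_le_sum (fun j _ => sq_nonneg (u j)) (mem_univ i)).trans hu
    have hsum : ∑ i, (u i * a i) ^ p ≤ (⨆ i, a i) ^ p := by
      calc ∑ i, (u i * a i) ^ p ≤ ∑ i, u i ^ 2 * (⨆ i, a i) ^ p := by
            refine sum_le_sum fun i _ => ?_
            rw [Real.mul_rpow (hu0 i) (ha i), ← Real.rpow_two]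
            exact mul_le_mul (Real.rpow_le_rpow_of_exponent_ge' (hu0 i) (hu1 i) zero_le_two hp)
              (Real.rpow_le_rpow (ha i) (haM i) (by linarith)) (Real.rpow_nonneg (ha i) p)
              (Real.rpow_nonneg (hu0 i) 2)
        _ = (∑ i, u i ^ 2) * (⨆ i, a i) ^ p := by rw [sum_mul]
        _ ≤ (⨆ i, a i) ^ p := mul_le_of_le_one_left (Real.rpow_nonneg hM p) hu
    have hsum0 : 0 ≤ ∑ i, (u i * a i) ^ p :=
      sum_nonneg fun i _ => Real.rpow_nonneg (mul_nonneg (hu0 i) (ha i)) p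
    calc (∑ i, (u i * a i) ^ p) ^ (1 / p) ≤ ((⨆ i, a i) ^ p) ^ (1 / p) := by gcongr
      _ = ⨆ i, a i := by rw [one_div, Real.rpow_rpow_inv hM hp0]

lemma isGreatest_l2BallLpValues_rpow_sum {p r : ℝ} (hpr : Real.HolderTriple 2 r p)
    (ha : ∀ i, 0 ≤ a i) :
    IsGreatest (l2BallLpValues p a) ((∑ i, a i ^ r) ^ (1 / r)) := by
  obtain ⟨hr, hp⟩ : 0 < r ∧ 0 < p := ⟨hpr.right_pos, hpr.pos'⟩
  have hrp : p * r + 2 * p = 2 * r := by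
    have := hpr.inv_add_inv_eq_inv
    field_simp at this
    linarith
  set S := ∑ i, a i ^ r
  have hS : 0 ≤ S := sum_nonneg fun i _ => Real.rpow_nonneg (ha i) r
  constructor
  · refine ⟨fun i => a i ^ (r / 2) / √S,
      fun i => div_nonneg (Real.rpow_nonneg (ha i) _) (Real.sqrt_nonneg S), ?_, ?_⟩
    · calc ∑ i, (a i ^ (r / 2) / √S) ^ 2 = S / S := by
            rw [sum_div]
            refine sum_congr rfl fun i _ => ?_
            rw [div_pow, Real.sq_sqrt hS, ← Real.rpow_two, ← Real.rpow_mul (ha i)]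
            ring_nf
        _ ≤ 1 := div_self_le_one S
    · have hterm (i : ι) : (a i ^ (r / 2) / √S * a i) ^ p = a i ^ r / S ^ (p / 2) := by
        rw [div_mul_eq_mul_div, ← Real.rpow_add_one' (ha i) (by positivity),
          Real.div_rpow (Real.rpow_nonneg (ha i) _) (Real.sqrt_nonneg _), ← Real.rpow_mul (ha i),
          Real.sqrt_eq_rpow, ← Real.rpow_mul hS]
        congr 2 <;> linarith
      have hSp : S / S ^ (p / 2) = S ^ (1 - p / 2) := by
        rw [Real.rpow_sub' hS (by linarith [hpr.lt]), Real.rpow_one]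
      rw [sum_congr rfl fun i _ => hterm i, ← sum_div, hSp, ← Real.rpow_mul hS]
      congr 1
      field_simp
      linarith
  · rintro _ ⟨u, hu0, hu, rfl⟩
    have holder := Real.Lr_rpow_le_Lp_mul_Lq_of_nonneg univ hpr (fun i _ => hu0 i)
      (fun i _ => ha i)
    have hu' : (∑ i, u i ^ (2 : ℝ)) ^ (p / 2) ≤ 1 := by
      simp only [Real.rpow_two]
      exact Real.rpow_le_one (sum_nonneg fun i _ => sq_nonneg _) hu (by linarith)
    have hsum0 : 0 ≤ ∑ i, (u i * a i) ^ p :=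
      sum_nonneg fun i _ => Real.rpow_nonneg (mul_nonneg (hu0 i) (ha i)) p
    calc (∑ i, (u i * a i) ^ p) ^ (1 / p) ≤ (S ^ (p / r)) ^ (1 / p) := by
          gcongr
          exact holder.trans (mul_le_of_le_one_left (Real.rpow_nonneg hS _) hu')
      _ = S ^ (1 / r) := by
          rw [← Real.rpow_mul hS]
          congr 1
          field_simp

end DiagonalOperator

lemma weakSummingNorm_eq_sSup_l2BallLpValues {H : Type*} [NormedAddCommGroup H]
    [InnerProductSpace ℂ H] (p : ℝ) {n : ℕ} {x : Fin n → H}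
    (hx : Pairwise fun i j => ⟪x i, x j⟫ = 0) :
    weakSummingNorm p x = sSup (l2BallLpValues p fun i => ‖x i‖) := by
  unfold weakSummingNorm l2BallLpValues
  congr 1
  ext s
  constructor
  · rintro ⟨f, hf, rfl⟩
    refine ⟨fun i => ‖f (x i)‖ / ‖x i‖, fun i => by positivity,
      (sum_norm_apply_div_norm_sq_le hx f).trans (pow_le_one₀ (norm_nonneg f) hf), ?_⟩
    congr! 3 with i
    rcases eq_or_ne (x i) 0 with h | h
    · simp [h]
    · rw [div_mul_cancel₀ _ (norm_ne_zero_iff.mpr h)]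
  · rintro ⟨u, hu0, hu, rfl⟩
    obtain ⟨f, hf, hfx⟩ := exists_norm_le_one_norm_apply_eq hx hu0 hu
    exact ⟨f, hf, by simp only [hfx]⟩

theorem stmt11_general {H : Type*} [NormedAddCommGroup H] [InnerProductSpace ℂ H]
    (p : ℝ) (n : ℕ) (x : Fin n → H)
    (hx : ∀ i j, i ≠ j → ⟪x i, x j⟫ = 0) :
    (2 ≤ p → weakSummingNorm p x = ⨆ i, ‖x i‖) ∧
    (∀ r : ℝ, 1 < p → p < 2 → 1 / r = 1 / p - 1 / 2 →
      weakSummingNorm p x = (∑ i, ‖x i‖ ^ r) ^ (1 / r)) ∧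
    (p = 1 → weakSummingNorm p x = (∑ i, ‖x i‖ ^ (2 : ℝ)) ^ ((1 : ℝ) / 2)) := by
  have hH := weakSummingNorm_eq_sSup_l2BallLpValues p fun i j => hx i j
  have ha (i : Fin n) : 0 ≤ ‖x i‖ := norm_nonneg _
  refine ⟨fun hp2 => ?_, fun r hp1 hp2 hr => ?_, fun hp1 => ?_⟩
  · rw [hH, (isGreatest_l2BallLpValues_iSup hp2 ha).csSup_eq]
  · have hr0 : 0 < r :=
      one_div_pos.mp (hr ▸ sub_pos.mpr (one_div_lt_one_div_of_lt (by linarith) hp2))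
    have hpr : Real.HolderTriple 2 r p := ⟨by rw [← one_div r, hr]; ring, two_pos, hr0⟩
    rw [hH, (isGreatest_l2BallLpValues_rpow_sum hpr ha).csSup_eq]
  · subst hp1
    have h221 : Real.HolderTriple 2 2 1 := ⟨by norm_num, two_pos, two_pos⟩
    rw [hH, (isGreatest_l2BallLpValues_rpow_sum h221 ha).csSup_eq]

theorem stmt11 {H : Type*} [NormedAddCommGroup H] [InnerProductSpace ℂ H]
    (p : ℝ) (hp : 1 ≤ p) (n : ℕ) (x : Fin n → H)
    (hx : ∀ i j, i ≠ j → ⟪x i, x j⟫ = 0) :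
    (2 ≤ p → weakSummingNorm p x = ⨆ i, ‖x i‖) ∧
    (∀ r : ℝ, 1 < p → p < 2 → 1 / r = 1 / p - 1 / 2 →
      weakSummingNorm p x = (∑ i, ‖x i‖ ^ r) ^ (1 / r)) ∧
    (p = 1 → weakSummingNorm p x = (∑ i, ‖x i‖ ^ (2 : ℝ)) ^ ((1 : ℝ) / 2)) :=
  stmt11_general p n x hx
end

section
/- In the real Hilbert space $\mathbb{R}^3$ with vectors $y_1 = \frac{1}{\sqrt{11}}(1,0,0)$, $y_2 = \frac{1}{\sqrt{11}}(1,1,0)$, $y_3 = \frac{1}{\sqrt{11}}(-1,2,1)$, one has $\sup\{\|t_1 y_1 + t_2 y_2 + t_3 y_3\| : t_1,t_2,t_3 \in \{-1,1\}\} = 1$, and $(y_1,y_2,y_3)$ is an extreme point of the set $L = \{(z_1,z_2,z_3) \in (\mathbb{R}^3)^3 : \|t_1 z_1 + t_2 z_2 + t_3 z_3\| \le 1 \text{ for all } t_i \in \{-1,1\}\}$, yet $\{y_1,y_2,y_3\}$ is not an orthogonal set. -/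
/-!
With `S_t z = ∑ tᵢ • zᵢ`, one computes `11 ‖S_t y‖² = (t₀ + t₁ - t₂)² + (t₁ + 2t₂)² + t₂²`, which is
at most `11` for every sign vector `t`, with equality for `t = (1,1,1), (1,1,-1), (1,-1,-1)`.
These three maps `S_t` jointly determine a triple. If `y` lies in an open segment of `L`, each
`S_t y` with `‖S_t y‖ = 1` lies in an open segment of the unit ball, which is strictly convex, so
the three values are constant along the segment, and hence so is the triple.
-/

open scoped BigOperators RealInnerProductSpace

open Set Function Metric

theorem mem_extremePoints_of_injective_of_map_mem_extremePoints {𝕜 E F J : Type*} [Ring 𝕜]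
    [PartialOrder 𝕜] [IsOrderedRing 𝕜] [AddCommGroup E] [Module 𝕜 E] [AddCommGroup F] [Module 𝕜 F]
    {A : Set E} {B : J → Set F} {x : E} (g : J → E →ₗ[𝕜] F)
    (hg : Injective fun u j ↦ g j u) (hA : ∀ j, MapsTo (g j) A (B j)) (hx : x ∈ A)
    (hgx : ∀ j, g j x ∈ extremePoints 𝕜 (B j)) : x ∈ extremePoints 𝕜 A := by
  refine ⟨hx, fun x₁ hx₁ x₂ hx₂ hseg ↦ hg (funext fun j ↦ ?_)⟩
  have himage := image_openSegment 𝕜 (g j).toAffineMap x₁ x₂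
  rw [LinearMap.coe_toAffineMap] at himage
  have hseg' : g j x ∈ openSegment 𝕜 (g j x₁) (g j x₂) := himage ▸ mem_image_of_mem _ hseg
  exact (hgx j).2 (hA j hx₁) (hA j hx₂) hseg'

def weightedSum {ι E : Type*} [Fintype ι] [AddCommGroup E] [Module ℝ E] (t : ι → ℝ) :
    (ι → E) →ₗ[ℝ] E :=
  ∑ i, t i • LinearMap.proj i

@[simp]
theorem weightedSum_apply {ι E : Type*} [Fintype ι] [AddCommGroup E] [Module ℝ E] (t : ι → ℝ)
    (z : ι → E) : weightedSum t z = ∑ i, t i • z i := by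
  simp [weightedSum]

def tightSigns : Fin 3 → Fin 3 → ℝ := ![![1, 1, 1], ![1, 1, -1], ![1, -1, -1]]

theorem injective_weightedSum_tightSigns {E : Type*} [AddCommGroup E] [Module ℝ E] :
    Injective fun (z : Fin 3 → E) j ↦ weightedSum (tightSigns j) z := by
  intro u v h
  have e0 := congrFun h 0
  have e1 := congrFun h 1
  have e2 := congrFun h 2
  simp only [tightSigns, weightedSum_apply, Fin.sum_univ_three, Matrix.cons_val_zero,
    Matrix.cons_val_one, Matrix.cons_val, one_smul, neg_smul] at e0 e1 e2
  funext i
  match i with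
  | 0 => linear_combination (norm := module) (2⁻¹ : ℝ) • (e0 + e2)
  | 1 => linear_combination (norm := module) (2⁻¹ : ℝ) • (e1 - e2)
  | 2 => linear_combination (norm := module) (2⁻¹ : ℝ) • (e0 - e1)

theorem tightSigns_apply_eq_one_or_eq_neg_one (j i : Fin 3) :
    tightSigns j i = 1 ∨ tightSigns j i = -1 := by
  fin_cases j <;> fin_cases i <;> simp [tightSigns]

noncomputable def exampleTriple : Fin 3 → EuclideanSpace ℝ (Fin 3) :=
  ![(Real.sqrt 11)⁻¹ • (WithLp.equiv 2 (Fin 3 → ℝ)).symm ![1, 0, 0],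
    (Real.sqrt 11)⁻¹ • (WithLp.equiv 2 (Fin 3 → ℝ)).symm ![1, 1, 0],
    (Real.sqrt 11)⁻¹ • (WithLp.equiv 2 (Fin 3 → ℝ)).symm ![-1, 2, 1]]

theorem weightedSum_exampleTriple (t : Fin 3 → ℝ) :
    weightedSum t exampleTriple =
      (Real.sqrt 11)⁻¹ • WithLp.toLp 2 ![t 0 + t 1 - t 2, t 1 + 2 * t 2, t 2] := by
  ext i
  fin_cases i <;> simp [exampleTriple, Fin.sum_univ_three] <;> ring

theorem norm_sq_weightedSum_exampleTriple (t : Fin 3 → ℝ) :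
    ‖weightedSum t exampleTriple‖ ^ 2 =
      ((t 0 + t 1 - t 2) ^ 2 + (t 1 + 2 * t 2) ^ 2 + t 2 ^ 2) / 11 := by
  rw [weightedSum_exampleTriple, norm_smul, mul_pow, EuclideanSpace.norm_sq_eq, norm_inv,
    Real.norm_of_nonneg (Real.sqrt_nonneg _), inv_pow, Real.sq_sqrt (by norm_num)]
  simp [Fin.sum_univ_three, div_eq_inv_mul]

theorem norm_weightedSum_exampleTriple_le_one {t : Fin 3 → ℝ} (ht : ∀ i, t i = 1 ∨ t i = -1) :
    ‖weightedSum t exampleTriple‖ ≤ 1 := by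
  refine pow_le_one_iff_of_nonneg (norm_nonneg _) two_ne_zero |>.1 ?_
  rw [norm_sq_weightedSum_exampleTriple]
  rcases ht 0 with h0 | h0 <;> rcases ht 1 with h1 | h1 <;> rcases ht 2 with h2 | h2 <;>
    norm_num [h0, h1, h2]

theorem norm_weightedSum_tightSigns_exampleTriple (j : Fin 3) :
    ‖weightedSum (tightSigns j) exampleTriple‖ = 1 := by
  refine pow_eq_one_iff_of_nonneg (norm_nonneg _) two_ne_zero |>.1 ?_
  rw [norm_sq_weightedSum_exampleTriple]
  fin_cases j <;> norm_num [tightSigns, Matrix.cons_val_two, Matrix.tail_cons, Matrix.head_cons]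

theorem inner_exampleTriple_zero_one : ⟪exampleTriple 0, exampleTriple 1⟫ = 1 / 11 := by
  have hdot : ⟪(WithLp.equiv 2 (Fin 3 → ℝ)).symm ![1, 0, 0],
      (WithLp.equiv 2 (Fin 3 → ℝ)).symm ![1, 1, 0]⟫ = 1 := by
    simp [EuclideanSpace.inner_eq_star_dotProduct]
  simp only [exampleTriple, Matrix.cons_val_zero, Matrix.cons_val_one, real_inner_smul_left,
    real_inner_smul_right, hdot]
  rw [mul_one, ← mul_inv, Real.mul_self_sqrt (by norm_num), one_div]

theorem stmt15 (y : Fin 3 → EuclideanSpace ℝ (Fin 3))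
    (hy0 : y 0 = (Real.sqrt 11)⁻¹ • (WithLp.equiv 2 (Fin 3 → ℝ)).symm ![1, 0, 0])
    (hy1 : y 1 = (Real.sqrt 11)⁻¹ • (WithLp.equiv 2 (Fin 3 → ℝ)).symm ![1, 1, 0])
    (hy2 : y 2 = (Real.sqrt 11)⁻¹ • (WithLp.equiv 2 (Fin 3 → ℝ)).symm ![-1, 2, 1]) :
    sSup {s : ℝ | ∃ t : Fin 3 → ℝ, (∀ i, t i = 1 ∨ t i = -1) ∧ s = ‖∑ i, t i • y i‖} = 1 ∧
    y ∈ Set.extremePoints ℝ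
      {z : Fin 3 → EuclideanSpace ℝ (Fin 3) |
        ∀ t : Fin 3 → ℝ, (∀ i, t i = 1 ∨ t i = -1) → ‖∑ i, t i • z i‖ ≤ 1} ∧
    ¬ (∀ i j, i ≠ j → ⟪y i, y j⟫ = 0) := by
  obtain rfl : y = exampleTriple := funext fun
    | 0 => hy0
    | 1 => hy1
    | 2 => hy2
  simp only [← weightedSum_apply]
  refine ⟨?_, ?_, fun h ↦ ?_⟩
  · refine IsGreatest.csSup_eq ⟨⟨tightSigns 0, tightSigns_apply_eq_one_or_eq_neg_one 0,
      (norm_weightedSum_tightSigns_exampleTriple 0).symm⟩, ?_⟩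
    rintro s ⟨t, ht, rfl⟩
    exact norm_weightedSum_exampleTriple_le_one ht
  · refine mem_extremePoints_of_injective_of_map_mem_extremePoints
      (fun j ↦ weightedSum (tightSigns j)) (B := fun _ ↦ closedBall 0 1)
      injective_weightedSum_tightSigns
      (fun j z hz ↦ mem_closedBall_zero_iff.2 (hz _ (tightSigns_apply_eq_one_or_eq_neg_one j)))
      (fun t ht ↦ norm_weightedSum_exampleTriple_le_one ht) fun j ↦ ?_
    exact StrictConvexSpace.sphere_subset_extremePoints_closedBall 0 one_ne_zero
      (mem_sphere_zero_iff_norm.2 (norm_weightedSum_tightSigns_exampleTriple j))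
  · have h01 := inner_exampleTriple_zero_one
    rw [h 0 1 (by decide)] at h01
    norm_num at h01
end

section
/- Let $H$ be a complex Hilbert space, $y_1,y_2,y_3 \in H$, and suppose $(\xi_1,\xi_2,\xi_3) \in \mathbb{T}^3$ maximizes $(\eta_1,\eta_2,\eta_3) \mapsto \|\eta_1 y_1 + \eta_2 y_2 + \eta_3 y_3\|$ over $\mathbb{T}^3$. Then $\operatorname{Im}\langle \xi_1 y_1, \xi_2 y_2 \rangle = \operatorname{Im}\langle \xi_2 y_2, \xi_3 y_3 \rangle = \operatorname{Im}\langle \xi_3 y_3, \xi_1 y_1 \rangle$. -/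
open scoped ComplexInnerProductSpace

/-! Rotating one summand `xᵢ = ξᵢ • yᵢ` by a unit scalar while keeping the others fixed cannot
increase the norm, and the linear term of `‖u • xᵢ + v‖²` is `2 Re (conj u ⟪xᵢ, v⟫)`; so
`⟪xᵢ, ∑_{j ≠ i} xⱼ⟫` must be real and nonnegative. Writing out these three imaginary parts with
`Im ⟪a, b⟫ = -Im ⟪b, a⟫` gives a linear system whose solutions are exactly the claimed equalities. -/

open RCLike ComplexConjugate in
theorem norm_inner_le_re_inner_of_forall_norm_smul_add_le {𝕜 E : Type*} [RCLike 𝕜]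
    [NormedAddCommGroup E] [InnerProductSpace 𝕜 E] {x v : E}
    (h : ∀ u : 𝕜, ‖u‖ = 1 → ‖u • x + v‖ ≤ ‖x + v‖) :
    ‖inner 𝕜 x v‖ ≤ re (inner 𝕜 x v) := by
  obtain ⟨c, hc, hcx⟩ := exists_norm_eq_mul_self (inner 𝕜 x v)
  have hsq := pow_le_pow_left₀ (norm_nonneg _) (h (conj c) (by rwa [norm_conj])) 2
  rw [norm_add_sq (𝕜 := 𝕜), norm_add_sq (𝕜 := 𝕜), norm_smul, norm_conj, hc, one_mul,
    inner_smul_left, conj_conj, ← hcx, ofReal_re] at hsq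
  linarith

theorem im_inner_eq_zero_of_forall_norm_smul_add_le {E : Type*} [NormedAddCommGroup E]
    [InnerProductSpace ℂ E] {x v : E} (h : ∀ u : ℂ, ‖u‖ = 1 → ‖u • x + v‖ ≤ ‖x + v‖) :
    (⟪x, v⟫).im = 0 :=
  RCLike.im_eq_zero_of_le (norm_inner_le_re_inner_of_forall_norm_smul_add_le h)

theorem stmt16 {H : Type*} [NormedAddCommGroup H] [InnerProductSpace ℂ H]
    (y₁ y₂ y₃ : H) (ξ₁ ξ₂ ξ₃ : ℂ) (hξ₁ : ‖ξ₁‖ = 1) (hξ₂ : ‖ξ₂‖ = 1) (hξ₃ : ‖ξ₃‖ = 1)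
    (hmax : ∀ η₁ η₂ η₃ : ℂ, ‖η₁‖ = 1 → ‖η₂‖ = 1 → ‖η₃‖ = 1 →
      ‖η₁ • y₁ + η₂ • y₂ + η₃ • y₃‖ ≤ ‖ξ₁ • y₁ + ξ₂ • y₂ + ξ₃ • y₃‖) :
    (⟪ξ₁ • y₁, ξ₂ • y₂⟫).im = (⟪ξ₂ • y₂, ξ₃ • y₃⟫).im ∧
    (⟪ξ₂ • y₂, ξ₃ • y₃⟫).im = (⟪ξ₃ • y₃, ξ₁ • y₁⟫).im := by
  have unit_mul {u ξ : ℂ} (hu : ‖u‖ = 1) (hξ : ‖ξ‖ = 1) : ‖u * ξ‖ = 1 := by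
    rw [norm_mul, hu, hξ, one_mul]
  have h₁ : (⟪ξ₁ • y₁, ξ₂ • y₂ + ξ₃ • y₃⟫).im = 0 :=
    im_inner_eq_zero_of_forall_norm_smul_add_le fun u hu => by
      convert hmax (u * ξ₁) ξ₂ ξ₃ (unit_mul hu hξ₁) hξ₂ hξ₃ using 2 <;> module
  have h₂ : (⟪ξ₂ • y₂, ξ₁ • y₁ + ξ₃ • y₃⟫).im = 0 :=
    im_inner_eq_zero_of_forall_norm_smul_add_le fun u hu => by
      convert hmax ξ₁ (u * ξ₂) ξ₃ hξ₁ (unit_mul hu hξ₂) hξ₃ using 2 <;> module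
  have h₃ : (⟪ξ₃ • y₃, ξ₁ • y₁ + ξ₂ • y₂⟫).im = 0 :=
    im_inner_eq_zero_of_forall_norm_smul_add_le fun u hu => by
      convert hmax ξ₁ ξ₂ (u * ξ₃) hξ₁ hξ₂ (unit_mul hu hξ₃) using 2 <;> module
  simp only [inner_add_right, Complex.add_im] at h₁ h₂ h₃
  have s₁₂ := inner_im_symm (𝕜 := ℂ) (ξ₁ • y₁) (ξ₂ • y₂)
  have s₂₃ := inner_im_symm (𝕜 := ℂ) (ξ₂ • y₂) (ξ₃ • y₃)
  have s₃₁ := inner_im_symm (𝕜 := ℂ) (ξ₃ • y₃) (ξ₁ • y₁)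
  simp only [RCLike.im_to_complex] at s₁₂ s₂₃ s₃₁
  constructor <;> linarith
end
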